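/- For every integer n ≥ 0, every integer r ≥ 1 and every real number x, E_{n,λ}^{(r)}(x) = Σ_{k=0}^{n} C_k^{(r)}(x)·S_{2,λ}(n,k). -/

import Mathlib

open Finset PowerSeries

/-- degenerate falling factorial `(x)_{n,λ}`; `dff 1 x n` is the ordinary falling factorial. -/
noncomputable def dff (lam x : ℝ) (n : ℕ) : ℝ := ∏ i ∈ Finset.range n, (x - (i : ℝ) * lam)

/-- `(1)_{n,1/λ} = ∏_{i<n} (1 - i/λ)`. -/
noncomputable def oneFall (lam : ℝ) (n : ℕ) : ℝ := ∏ i ∈ Finset.range n, (1 - (i : ℝ) / lam)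

/-- degenerate exponential `e_λ^x(t)` as a formal power series. -/
noncomputable def degExp (lam x : ℝ) : PowerSeries ℝ :=
  PowerSeries.mk fun n => dff lam x n / n.factorial

/-- `(1+t)^y = Σ_{n≥0} (y)_n t^n/n!`. -/
noncomputable def onePlus (y : ℝ) : PowerSeries ℝ :=
  PowerSeries.mk fun n => dff 1 y n / n.factorial

/-- `(1-t)^y = Σ_{n≥0} (y)_n (-1)^n t^n/n!`. -/
noncomputable def oneMinus (y : ℝ) : PowerSeries ℝ :=
  PowerSeries.mk fun n => dff 1 y n * (-1) ^ n / n.factorial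

/-- `log_λ(1+t) = Σ_{n≥1} λ^{n-1} (1)_{n,1/λ} t^n/n!`. -/
noncomputable def degLog (lam : ℝ) : PowerSeries ℝ :=
  PowerSeries.mk fun n => if n = 0 then 0 else lam ^ (n - 1) * oneFall lam n / n.factorial

/-- `log_λ(1-t) = Σ_{n≥1} λ^{n-1} (1)_{n,1/λ} (-1)^n t^n/n!`. -/
noncomputable def degLogNeg (lam : ℝ) : PowerSeries ℝ :=
  PowerSeries.mk fun n =>
    if n = 0 then 0 else lam ^ (n - 1) * oneFall lam n * (-1) ^ n / n.factorial

/-- composition `f(g(t))` of formal power series (the usual composition when the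
constant term of `g` is zero). -/
noncomputable def pcomp (f g : PowerSeries ℝ) : PowerSeries ℝ :=
  PowerSeries.mk fun n =>
    ∑ k ∈ Finset.range (n + 1), (PowerSeries.coeff k f) * (PowerSeries.coeff n (g ^ k))

/-!
Substituting `t ↦ e_λ(t) - 1` into `(1+t)^y` gives `e_λ^y(t)`, since the defining relation of
`S_{2,λ}` amounts to `(e_λ(t) - 1)^k / k! = Σ_n S_{2,λ}(n,k) t^n/n!`. Substituting into the
identity defining `C_n^{(r)}(x)` therefore gives `(e_λ^2(t) + 1)^r G(t) = 2^r e_λ^{x+r}(t)`, where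
`G` is the exponential generating function of `Σ_k C_k^{(r)}(x) S_{2,λ}(n,k)`. As
`e_λ^2 + 1 = e_λ (e_λ + e_λ^{-1})` and `e_λ^{x+r} = e_λ^r e_λ^x`, cancelling `e_λ(t)^r` leaves the
identity defining `E_{n,λ}^{(r)}(x)`.
-/

lemma dff_succ (lam x : ℝ) (n : ℕ) : dff lam x (n + 1) = dff lam x n * (x - n * lam) :=
  prod_range_succ _ _

lemma dff_add (lam x y : ℝ) (n : ℕ) :
    dff lam (x + y) n =
      ∑ ij ∈ antidiagonal n, (n.choose ij.1 : ℝ) * (dff lam x ij.1 * dff lam y ij.2) := by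
  induction n with
  | zero => simp [dff]
  | succ n ih =>
    rw [sum_antidiagonal_choose_succ_mul (fun i j => dff lam x i * dff lam y j), dff_succ, ih,
      sum_mul, ← sum_add_distrib]
    refine sum_congr rfl fun ij hij => ?_
    rw [HasAntidiagonal.mem_antidiagonal] at hij
    have hn : (n : ℝ) = ij.1 + ij.2 := by exact_mod_cast hij.symm
    rw [Nat.choose_symm_of_eq_add hij.symm, dff_succ, dff_succ, hn]
    ring

lemma degExp_mul (lam x y : ℝ) : degExp lam x * degExp lam y = degExp lam (x + y) := by
  ext n
  simp only [degExp, coeff_mul, coeff_mk, dff_add, sum_div]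
  refine sum_congr rfl fun ij hij => ?_
  rw [HasAntidiagonal.mem_antidiagonal] at hij
  subst hij
  rw [Nat.cast_choose ℝ (Nat.le_add_right ij.1 ij.2), Nat.add_sub_cancel_left]
  field_simp

lemma degExp_zero (lam : ℝ) : degExp lam 0 = 1 := by
  ext (_ | n)
  · simp [degExp, dff]
  · simp [degExp, dff, prod_range_succ']

lemma degExp_one_pow (lam : ℝ) (k : ℕ) : degExp lam 1 ^ k = degExp lam k := by
  induction k with
  | zero => simp [degExp_zero]
  | succ k ih => rw [pow_succ, ih, degExp_mul, Nat.cast_succ]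

lemma constantCoeff_degExp (lam x : ℝ) : constantCoeff (degExp lam x) = 1 := by
  simp [← coeff_zero_eq_constantCoeff_apply, degExp, dff]

lemma degExp_one_one : degExp 1 1 = 1 + X := by
  ext (_ | _ | n)
  · simp [degExp, dff]
  · simp [degExp, dff]
  · have : dff 1 1 (n + 2) = 0 := prod_eq_zero (i := 1) (by simp) (by norm_num)
    simp [degExp, this, coeff_one, coeff_X]

lemma coeff_degExp_sub_one_pow (lam : ℝ) (k n : ℕ) :
    coeff n ((degExp lam 1 - 1) ^ k) =
      (∑ j ∈ range (k + 1), (-1) ^ (j + k) * (k.choose j : ℝ) * dff lam j n) / n.factorial := by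
  rw [sub_pow, map_sum, sum_div]
  refine sum_congr rfl fun j _ => ?_
  have hcoef : ((-1) ^ (j + k) * (k.choose j : ℝ⟦X⟧)) = C ((-1) ^ (j + k) * (k.choose j : ℝ)) := by
    simp
  rw [one_pow, mul_one, degExp_one_pow, mul_right_comm, hcoef]
  simp only [coeff_C_mul, degExp, coeff_mk]
  ring

/-- Read off from `(e_1(t) - 1)^k = t^k`. -/
lemma sum_choose_mul_dff_one (k l : ℕ) :
    ∑ j ∈ range (k + 1), (-1) ^ (j + k) * (k.choose j : ℝ) * dff 1 j l =
      if l = k then (k.factorial : ℝ) else 0 := by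
  have h := coeff_degExp_sub_one_pow 1 k l
  rw [degExp_one_one, add_sub_cancel_left, coeff_X_pow, eq_div_iff (by positivity)] at h
  split_ifs at h ⊢ with hlk
  · rw [← h, hlk, one_mul]
  · rw [← h, zero_mul]

lemma hasSubst_degExp_sub_one (lam : ℝ) : HasSubst (degExp lam 1 - 1) :=
  HasSubst.of_constantCoeff_zero' (by simp [constantCoeff_degExp])

section Stirling

variable {lam : ℝ} {S2 : ℕ → ℕ → ℝ}

lemma coeff_degExp_sub_one_pow_of_stirling
    (hS2 : ∀ (x : ℝ) (n : ℕ), dff lam x n = ∑ l ∈ range (n + 1), S2 n l * dff 1 x l)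
    (k n : ℕ) :
    coeff n ((degExp lam 1 - 1) ^ k) =
      if k ≤ n then S2 n k * k.factorial / n.factorial else 0 := by
  have expand : ∑ j ∈ range (k + 1), (-1) ^ (j + k) * (k.choose j : ℝ) * dff lam j n =
      ∑ l ∈ range (n + 1),
        S2 n l * ∑ j ∈ range (k + 1), (-1) ^ (j + k) * (k.choose j : ℝ) * dff 1 j l := by
    simp only [hS2 _ n, mul_sum]
    rw [sum_comm]
    exact sum_congr rfl fun l _ => sum_congr rfl fun j _ => by ring
  rw [coeff_degExp_sub_one_pow, expand]
  simp only [sum_choose_mul_dff_one, mul_ite, mul_zero, sum_ite_eq', mem_range, Nat.lt_succ_iff]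
  split_ifs <;> simp

lemma coeff_subst_degExp_sub_one
    (hS2 : ∀ (x : ℝ) (n : ℕ), dff lam x n = ∑ l ∈ range (n + 1), S2 n l * dff 1 x l)
    (a : ℕ → ℝ) (n : ℕ) :
    coeff n ((mk fun k => a k / k.factorial).subst (degExp lam 1 - 1)) =
      (∑ k ∈ range (n + 1), a k * S2 n k) / n.factorial := by
  rw [coeff_subst' (hasSubst_degExp_sub_one lam), sum_div,
    finsum_eq_sum_of_support_subset (s := range (n + 1))]
  · refine sum_congr rfl fun k hk => ?_
    rw [coeff_degExp_sub_one_pow_of_stirling hS2, if_pos (Nat.lt_succ_iff.mp (mem_range.mp hk)),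
      coeff_mk, smul_eq_mul]
    field_simp
  · intro k hk
    rw [Function.mem_support, coeff_degExp_sub_one_pow_of_stirling hS2] at hk
    simp only [coe_range, Set.mem_Iio, Nat.lt_succ_iff]
    by_contra hkn
    exact hk (by simp [hkn])

lemma subst_onePlus
    (hS2 : ∀ (x : ℝ) (n : ℕ), dff lam x n = ∑ l ∈ range (n + 1), S2 n l * dff 1 x l)
    (y : ℝ) : (onePlus y).subst (degExp lam 1 - 1) = degExp lam y := by
  ext n
  rw [onePlus, coeff_subst_degExp_sub_one hS2, degExp, coeff_mk, hS2 y n]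
  simp only [mul_comm]

end Stirling

lemma degExp_one_mul_add_neg (lam : ℝ) :
    degExp lam 1 * (degExp lam 1 + degExp lam (-1)) = degExp lam 2 + 1 := by
  rw [mul_add, degExp_mul, degExp_mul]
  norm_num [degExp_zero]

theorem stmt_5_general (lam : ℝ) (r : ℕ)
    (S2 : ℕ → ℕ → ℝ)
    (hS2 : ∀ (x : ℝ) (n : ℕ), dff lam x n = ∑ l ∈ Finset.range (n + 1), S2 n l * dff 1 x l)
    (E C : ℝ → ℕ → ℝ)
    (hE : ∀ x : ℝ, (degExp lam 1 + degExp lam (-1)) ^ r *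
      PowerSeries.mk (fun n => E x n / n.factorial) = 2 ^ r * degExp lam x)
    (hC : ∀ x : ℝ, (onePlus 2 + 1) ^ r *
      PowerSeries.mk (fun n => C x n / n.factorial) = 2 ^ r * onePlus (x + r))
    (n : ℕ) (x : ℝ) :
    E x n = ∑ k ∈ Finset.range (n + 1), C x k * S2 n k := by
  set P := degExp lam 1 * (degExp lam 1 + degExp lam (-1)) with hP_def
  have hC_subst := congrArg (substAlgHom (hasSubst_degExp_sub_one lam)) (hC x)
  simp only [map_mul, map_pow, map_add, map_one, map_ofNat, coe_substAlgHom,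
    subst_onePlus hS2] at hC_subst
  have hP : P ^ r * (mk fun k => C x k / k.factorial).subst (degExp lam 1 - 1) =
      P ^ r * mk fun k => E x k / k.factorial :=
    calc _ = 2 ^ r * degExp lam (x + r) := by rw [hP_def, degExp_one_mul_add_neg, hC_subst]
      _ = degExp lam 1 ^ r * (2 ^ r * degExp lam x) := by
        rw [degExp_one_pow, mul_left_comm, degExp_mul, add_comm]
      _ = _ := by rw [← hE x, hP_def, mul_pow]; ring
  have hP_ne : P ^ r ≠ 0 :=
    pow_ne_zero _ fun h => by simpa [P, constantCoeff_degExp] using congrArg constantCoeff h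
  have := congrArg (coeff n) (mul_left_cancel₀ hP_ne hP)
  rw [coeff_subst_degExp_sub_one hS2, coeff_mk, div_left_inj' (by positivity)] at this
  exact this.symm

/-- `E_{n,λ}^{(r)}(x) = Σ_{k=0}^{n} C_k^{(r)}(x) S_{2,λ}(n,k)`. -/
theorem stmt_5 (lam : ℝ) (hlam : lam ≠ 0) (r : ℕ) (hr : 1 ≤ r)
    (S2 : ℕ → ℕ → ℝ)
    (hS2 : ∀ (x : ℝ) (n : ℕ), dff lam x n = ∑ l ∈ Finset.range (n + 1), S2 n l * dff 1 x l)
    (E C : ℝ → ℕ → ℝ)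
    (hE : ∀ x : ℝ, (degExp lam 1 + degExp lam (-1)) ^ r *
      PowerSeries.mk (fun n => E x n / n.factorial) = 2 ^ r * degExp lam x)
    (hC : ∀ x : ℝ, (onePlus 2 + 1) ^ r *
      PowerSeries.mk (fun n => C x n / n.factorial) = 2 ^ r * onePlus (x + r))
    (n : ℕ) (x : ℝ) :
    E x n = ∑ k ∈ Finset.range (n + 1), C x k * S2 n k :=
  stmt_5_general lam r S2 hS2 E C hE hC n x
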